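/- For any r ∈ (1, 2], the function ψ_r(w) = (1/(2(r−1)))‖w‖_r² on ℝ^d is 2-uniformly convex with respect to the ℓ_r norm, i.e., for all w, w' and α ∈ [0,1]: ψ_r(αw + (1−α)w') ≤ αψ_r(w) + (1−α)ψ_r(w') − (α(1−α)/2)‖w − w'‖_r². -/

import Mathlib

/-!
The heart of the matter is the Ball–Carlen–Lieb midpoint inequality
`‖u‖² + (r - 1)‖v‖² ≤ (‖u + v‖² + ‖u - v‖²) / 2` in `ℓ_r`. In one coordinate it reads
`(a² + (r - 1)b²)^(r/2) ≤ (|a + b|^r + |a - b|^r) / 2`, which after scaling to `a = 1` follows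
from Bernoulli's inequality and two monotonicity arguments. Summing over coordinates, the left
side is controlled by the reverse Minkowski inequality in `ℓ_(r/2)` and the right side by
concavity of `x ↦ x^(r/2)`. Finally, a continuous midpoint-convex function of one real variable
is convex, which turns the midpoint inequality into the inequality for arbitrary weights.
-/

open Finset

/-- The ℓ_r norm on ℝ^d : `‖w‖_r = (∑ i, |w i| ^ r) ^ (1 / r)`. -/
noncomputable def lpNorm (r : ℝ) {d : ℕ} (w : Fin d → ℝ) : ℝ :=
  (∑ i, |w i| ^ r) ^ (1 / r)

open Real Set
open scoped ENNReal

theorem two_le_one_add_rpow_add_one_sub_rpow {e t : ℝ} (he : e ≤ 0) (ht0 : -1 < t)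
    (ht1 : t < 1) : 2 ≤ (1 + t) ^ e + (1 - t) ^ e := by
  have h1 : 0 < 1 + t := by linarith
  have h2 : 0 < 1 - t := by linarith
  have hprod : 1 ≤ (1 + t) ^ (e / 2) * (1 - t) ^ (e / 2) := by
    rw [← mul_rpow h1.le h2.le]
    exact one_le_rpow_of_pos_of_le_one_of_nonpos (by positivity) (by nlinarith [sq_nonneg t])
      (by linarith)
  have hsq : ∀ x : ℝ, 0 < x → x ^ e = (x ^ (e / 2)) ^ 2 := fun x hx => by
    rw [← rpow_natCast, ← rpow_mul hx.le]; norm_num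
  rw [hsq _ h1, hsq _ h2]
  nlinarith [sq_nonneg ((1 + t) ^ (e / 2) - (1 - t) ^ (e / 2))]

theorem two_mul_mul_le_one_add_rpow_sub_one_sub_rpow {q t : ℝ} (hq0 : 0 < q) (hq1 : q ≤ 1)
    (ht0 : 0 ≤ t) (ht1 : t ≤ 1) : 2 * q * t ≤ (1 + t) ^ q - (1 - t) ^ q := by
  let k : ℝ → ℝ := fun t => (1 + t) ^ q - (1 - t) ^ q - 2 * q * t
  have hcont : ContinuousOn k (Icc 0 1) := by
    have := continuous_rpow_const hq0.le
    fun_prop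
  have hderiv : ∀ x ∈ interior (Icc (0:ℝ) 1), HasDerivWithinAt k
      (q * ((1 + x) ^ (q - 1) + (1 - x) ^ (q - 1) - 2)) (interior (Icc 0 1)) x := by
    rw [interior_Icc]
    rintro x ⟨hx0, hx1⟩
    have h := ((((hasDerivAt_id x).const_add 1).rpow_const (p := q)
      (Or.inl (by simp; linarith))).sub (((hasDerivAt_id x).const_sub 1).rpow_const (p := q)
      (Or.inl (by simp; linarith)))).sub ((hasDerivAt_id x).const_mul (2 * q))
    exact (h.congr_deriv (by simp; ring)).hasDerivWithinAt
  have hmono := monotoneOn_of_hasDerivWithinAt_nonneg (convex_Icc 0 1) hcont hderiv (by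
    rw [interior_Icc]
    rintro x ⟨hx0, hx1⟩
    have := two_le_one_add_rpow_add_one_sub_rpow (by linarith : q - 1 ≤ 0) (by linarith) hx1
    nlinarith)
  have := hmono (left_mem_Icc.2 zero_le_one) ⟨ht0, ht1⟩ ht0
  simp [k] at this
  linarith

theorem one_add_mul_sq_le_one_add_rpow_add_one_sub_rpow {p t : ℝ} (hp1 : 1 < p) (hp2 : p ≤ 2)
    (ht0 : 0 ≤ t) (ht1 : t ≤ 1) :
    1 + p * (p - 1) / 2 * t ^ 2 ≤ ((1 + t) ^ p + (1 - t) ^ p) / 2 := by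
  have hp0 : 0 < p := by linarith
  let h : ℝ → ℝ := fun t => ((1 + t) ^ p + (1 - t) ^ p) / 2 - p * (p - 1) / 2 * t ^ 2
  have hcont : ContinuousOn h (Icc 0 1) := by
    have := continuous_rpow_const hp0.le
    fun_prop
  have hderiv : ∀ x ∈ interior (Icc (0:ℝ) 1), HasDerivWithinAt h
      (p / 2 * ((1 + x) ^ (p - 1) - (1 - x) ^ (p - 1) - 2 * (p - 1) * x))
      (interior (Icc 0 1)) x := by
    rw [interior_Icc]
    rintro x ⟨hx0, hx1⟩
    have hd := (((((hasDerivAt_id x).const_add 1).rpow_const (p := p)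
      (Or.inl (by simp; linarith))).add (((hasDerivAt_id x).const_sub 1).rpow_const (p := p)
      (Or.inl (by simp; linarith)))).div_const 2).sub
      ((hasDerivAt_pow 2 x).const_mul (p * (p - 1) / 2))
    exact (hd.congr_deriv (by simp; ring)).hasDerivWithinAt
  have hmono := monotoneOn_of_hasDerivWithinAt_nonneg (convex_Icc 0 1) hcont hderiv (by
    rw [interior_Icc]
    rintro x ⟨hx0, hx1⟩
    have := two_mul_mul_le_one_add_rpow_sub_one_sub_rpow (by linarith : 0 < p - 1)
      (by linarith) hx0.le hx1.le
    have : 0 ≤ (1 + x) ^ (p - 1) - (1 - x) ^ (p - 1) - 2 * (p - 1) * x := by linarith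
    positivity)
  have := hmono (left_mem_Icc.2 zero_le_one) ⟨ht0, ht1⟩ ht0
  simp [h] at this
  linarith

theorem one_add_mul_sq_rpow_le {p t : ℝ} (hp1 : 1 < p) (hp2 : p ≤ 2) (ht0 : 0 ≤ t)
    (ht1 : t ≤ 1) : (1 + (p - 1) * t ^ 2) ^ (p / 2) ≤ ((1 + t) ^ p + (1 - t) ^ p) / 2 :=
  calc (1 + (p - 1) * t ^ 2) ^ (p / 2) ≤ 1 + p / 2 * ((p - 1) * t ^ 2) :=
        rpow_one_add_le_one_add_mul_self (by nlinarith) (by linarith) (by linarith)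
    _ = 1 + p * (p - 1) / 2 * t ^ 2 := by ring
    _ ≤ _ := one_add_mul_sq_le_one_add_rpow_add_one_sub_rpow hp1 hp2 ht0 ht1

theorem sq_add_mul_sq_rpow_le {p : ℝ} (hp1 : 1 < p) (hp2 : p ≤ 2) (a b : ℝ) :
    (a ^ 2 + (p - 1) * b ^ 2) ^ (p / 2) ≤ (|a + b| ^ p + |a - b| ^ p) / 2 := by
  have hp0 : 0 < p := by linarith
  wlog hba : |b| ≤ |a| generalizing a b
  · have hab : a ^ 2 ≤ b ^ 2 := sq_le_sq.2 (le_of_not_ge hba)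
    calc (a ^ 2 + (p - 1) * b ^ 2) ^ (p / 2) ≤ (b ^ 2 + (p - 1) * a ^ 2) ^ (p / 2) :=
          rpow_le_rpow (by nlinarith) (by nlinarith) (by positivity)
      _ ≤ (|b + a| ^ p + |b - a| ^ p) / 2 := this b a (le_of_not_ge hba)
      _ = (|a + b| ^ p + |a - b| ^ p) / 2 := by rw [add_comm b, abs_sub_comm]
  wlog ha : 0 ≤ a generalizing a b
  · have e₁ : |-a + -b| = |a + b| := by rw [← neg_add, abs_neg]
    have e₂ : |-a - -b| = |a - b| := by rw [sub_neg_eq_add, neg_add_eq_sub, abs_sub_comm]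
    simpa only [neg_sq, e₁, e₂] using this (-a) (-b) (by simpa using hba) (by linarith)
  wlog hb : 0 ≤ b generalizing b
  · have e₁ : |a + -b| = |a - b| := by rw [sub_eq_add_neg]
    have e₂ : |a - -b| = |a + b| := by rw [sub_neg_eq_add]
    have := this (-b) (by simpa using hba) (by linarith)
    rwa [neg_sq, e₁, e₂, add_comm (|a - b| ^ p)] at this
  rw [abs_of_nonneg ha, abs_of_nonneg hb] at hba
  rw [abs_of_nonneg (by linarith), abs_of_nonneg (by linarith)]
  rcases ha.eq_or_lt with rfl | ha
  · obtain rfl : b = 0 := le_antisymm hba hb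
    simp [zero_rpow hp0.ne', zero_rpow (by positivity : p / 2 ≠ 0)]
  obtain ⟨t, rfl⟩ : ∃ t, b = a * t := ⟨b / a, by field_simp⟩
  have ht0 : 0 ≤ t := nonneg_of_mul_nonneg_right hb ha
  have ht1 : t ≤ 1 := by nlinarith
  have hsq : (a ^ 2) ^ (p / 2) = a ^ p := by
    rw [← rpow_natCast, ← rpow_mul ha.le]; ring_nf
  calc (a ^ 2 + (p - 1) * (a * t) ^ 2) ^ (p / 2)
      = a ^ p * (1 + (p - 1) * t ^ 2) ^ (p / 2) := by
        rw [← hsq, ← mul_rpow (by positivity) (by nlinarith)]; ring_nf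
    _ ≤ a ^ p * (((1 + t) ^ p + (1 - t) ^ p) / 2) :=
        mul_le_mul_of_nonneg_left (one_add_mul_sq_rpow_le hp1 hp2 ht0 ht1) (by positivity)
    _ = ((a + a * t) ^ p + (a - a * t) ^ p) / 2 := by
        rw [← mul_one_add, ← mul_one_sub, mul_rpow ha.le (by linarith),
          mul_rpow ha.le (by linarith)]
        ring

theorem nonneg_of_midpoint_concave {g : ℝ → ℝ} (hg : ContinuousOn g (Icc 0 1))
    (h0 : 0 ≤ g 0) (h1 : 0 ≤ g 1)
    (hmid : ∀ s ∈ Icc (0 : ℝ) 1, ∀ t ∈ Icc (0 : ℝ) 1, (g s + g t) / 2 ≤ g ((s + t) / 2))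
    {a : ℝ} (ha : a ∈ Icc (0 : ℝ) 1) : 0 ≤ g a := by
  by_contra! hneg
  obtain ⟨x₀, hx₀, hmin⟩ := isCompact_Icc.exists_isMinOn (nonempty_Icc.2 zero_le_one) hg
  -- The leftmost minimiser `c` of `g` violates midpoint concavity: `g (c - δ) > g c ≤ g (c + δ)`.
  set S := Icc (0 : ℝ) 1 ∩ g ⁻¹' Iic (g x₀)
  have hSbdd : BddBelow S := ⟨0, fun x hx => hx.1.1⟩
  have hc : sInf S ∈ S := (hg.preimage_isClosed_of_isClosed isClosed_Icc isClosed_Iic).csInf_mem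
    ⟨x₀, hx₀, le_refl (g x₀)⟩ hSbdd
  set c := sInf S
  have hgc : g c < 0 := lt_of_le_of_lt hc.2 ((hmin ha).trans_lt hneg)
  have hc0 : 0 < c := lt_of_le_of_ne hc.1.1 fun h => by rw [← h] at hgc; linarith
  have hc1 : c < 1 := lt_of_le_of_ne hc.1.2 fun h => by rw [h] at hgc; linarith
  set δ := min c (1 - c)
  have hδ : 0 < δ := lt_min hc0 (by linarith)
  have hl : c - δ ∈ Icc (0 : ℝ) 1 := ⟨by linarith [min_le_left c (1 - c)], by linarith⟩
  have hr : c + δ ∈ Icc (0 : ℝ) 1 := ⟨by linarith, by linarith [min_le_right c (1 - c)]⟩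
  have hlt : g c < g (c - δ) := by
    by_contra! hle
    linarith [csInf_le hSbdd ⟨hl, hle.trans hc.2⟩]
  have hmid_c := hmid _ hl _ hr
  rw [show (c - δ + (c + δ)) / 2 = c by ring] at hmid_c
  have hcx₀ : g c ≤ g x₀ := hc.2
  have hx₀r : g x₀ ≤ g (c + δ) := hmin hr
  linarith

theorem convexOn_univ_of_midpoint_le {f : ℝ → ℝ} (hf : Continuous f)
    (hmid : ∀ s t, f ((s + t) / 2) ≤ (f s + f t) / 2) : ConvexOn ℝ univ f := by
  refine ⟨convex_univ, fun x _ y _ a b ha hb hab => ?_⟩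
  obtain rfl : b = 1 - a := by linarith
  let g : ℝ → ℝ := fun t => t * f x + (1 - t) * f y - f (t * x + (1 - t) * y)
  have hg := nonneg_of_midpoint_concave (g := g) (by fun_prop) (by simp [g])
    (by simp [g]) (fun s _ t _ => by
      have := hmid (s * x + (1 - s) * y) (t * x + (1 - t) * y)
      rw [show (s * x + (1 - s) * y + (t * x + (1 - t) * y)) / 2
        = (s + t) / 2 * x + (1 - (s + t) / 2) * y by ring] at this
      simp only [g]
      linarith) ⟨ha, by linarith⟩
  simp only [g, smul_eq_mul] at hg ⊢
  linarith

theorem strongConvexOn_univ_of_midpoint_le {E : Type*} [NormedAddCommGroup E] [NormedSpace ℝ E]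
    {f : E → ℝ} {m : ℝ} (hf : Continuous f)
    (hmid : ∀ u v, f u + m / 2 * ‖v‖ ^ 2 ≤ (f (u + v) + f (u - v)) / 2) :
    StrongConvexOn univ m f := by
  refine ⟨convex_univ, fun x _ y _ a b ha hb hab => ?_⟩
  obtain rfl : b = 1 - a := by linarith
  set z := x - y
  let G : ℝ → ℝ := fun t => f (y + t • z) - m / 2 * t ^ 2 * ‖z‖ ^ 2
  have hG : ConvexOn ℝ univ G := by
    refine convexOn_univ_of_midpoint_le (by fun_prop) fun s t => ?_
    have hmid_st := hmid (y + ((s + t) / 2) • z) (((s - t) / 2) • z)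
    rw [norm_smul, mul_pow, Real.norm_eq_abs, sq_abs,
      show y + ((s + t) / 2) • z + ((s - t) / 2) • z = y + s • z by module,
      show y + ((s + t) / 2) • z - ((s - t) / 2) • z = y + t • z by module] at hmid_st
    simp only [G]
    nlinarith
  have hGa := hG.2 (mem_univ 1) (mem_univ 0) ha hb (add_sub_cancel a 1)
  simp only [G, smul_eq_mul, mul_one, mul_zero, add_zero, zero_smul, one_smul] at hGa
  rw [show y + a • z = a • x + (1 - a) • y by module, show y + z = x by module] at hGa
  simp only [smul_eq_mul]
  nlinarith

section lpNorm

variable {d : ℕ}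

theorem lpNorm_nonneg (r : ℝ) (w : Fin d → ℝ) : 0 ≤ lpNorm r w :=
  rpow_nonneg (sum_nonneg fun _ _ => rpow_nonneg (abs_nonneg _) _) _

theorem lpNorm_rpow {r : ℝ} (hr : r ≠ 0) (w : Fin d → ℝ) : lpNorm r w ^ r = ∑ i, |w i| ^ r := by
  rw [lpNorm, ← rpow_mul (sum_nonneg fun _ _ => rpow_nonneg (abs_nonneg _) _),
    one_div_mul_cancel hr, rpow_one]

theorem lpNorm_smul {r : ℝ} (hr : 0 < r) (c : ℝ) (w : Fin d → ℝ) :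
    lpNorm r (c • w) = |c| * lpNorm r w := by
  simp only [lpNorm, Pi.smul_apply, smul_eq_mul, abs_mul,
    mul_rpow (abs_nonneg c) (abs_nonneg _), ← mul_sum]
  rw [mul_rpow (by positivity) (sum_nonneg fun _ _ => by positivity),
    one_div, rpow_rpow_inv (abs_nonneg c) hr.ne']

theorem norm_eq_lpNorm_ofLp {p : ℝ≥0∞} (hp : 0 < p.toReal) (x : PiLp p fun _ : Fin d => ℝ) :
    ‖x‖ = lpNorm p.toReal x.ofLp := by
  simp [PiLp.norm_eq_sum hp, lpNorm]

theorem lpNorm_sum_le {r : ℝ} (hr : 1 ≤ r) {ι : Type*} (s : Finset ι) (v : ι → Fin d → ℝ) :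
    lpNorm r (∑ i ∈ s, v i) ≤ ∑ i ∈ s, lpNorm r (v i) := by
  have : Fact (1 ≤ ENNReal.ofReal r) := ⟨by simpa using hr⟩
  have hr' : (ENNReal.ofReal r).toReal = r := ENNReal.toReal_ofReal (by linarith)
  have h := norm_sum_le s fun i => WithLp.toLp (ENNReal.ofReal r) (v i)
  simp only [norm_eq_lpNorm_ofLp (hr'.symm ▸ (by linarith : (0 : ℝ) < r)), hr',
    ← WithLp.toLp_sum] at h
  exact h

theorem lpNorm_add_lpNorm_le_of_le_one {s : ℝ} (hs0 : 0 < s) (hs1 : s ≤ 1) {x y : Fin d → ℝ}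
    (hx : 0 ≤ x) (hy : 0 ≤ y) : lpNorm s x + lpNorm s y ≤ lpNorm s (x + y) := by
  -- The triangle inequality of `ℓ_(1/s)` on `ℝ²`, applied to the sum of the vectors
  -- `(x i ^ s, y i ^ s)`, raised to the power `1 / s`.
  have hpair : ∀ A B : ℝ, 0 ≤ A → 0 ≤ B →
      lpNorm (1 / s) ![A, B] = (A ^ (1 / s) + B ^ (1 / s)) ^ s := by
    intro A B hA hB
    simp [lpNorm, Fin.sum_univ_two, abs_of_nonneg, hA, hB]
  have hnorm : ∀ z : Fin d → ℝ, 0 ≤ z → (∑ i, z i ^ s) ^ (1 / s) = lpNorm s z := by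
    intro z hz
    simp only [lpNorm, abs_of_nonneg (hz _)]
  have hsum : ∑ i, ![x i ^ s, y i ^ s] = ![∑ i, x i ^ s, ∑ i, y i ^ s] := by
    ext j; fin_cases j <;> simp [Finset.sum_apply]
  have key := lpNorm_sum_le (one_le_one_div hs0 hs1) univ fun i => ![x i ^ s, y i ^ s]
  rw [hsum, hpair _ _ (sum_nonneg fun i _ => rpow_nonneg (hx i) s)
      (sum_nonneg fun i _ => rpow_nonneg (hy i) s), hnorm x hx, hnorm y hy] at key
  have hterm : ∀ i, lpNorm (1 / s) ![x i ^ s, y i ^ s] = |(x + y) i| ^ s := fun i => by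
    rw [hpair _ _ (rpow_nonneg (hx i) s) (rpow_nonneg (hy i) s), one_div,
      rpow_rpow_inv (hx i) hs0.ne', rpow_rpow_inv (hy i) hs0.ne', Pi.add_apply,
      abs_of_nonneg (add_nonneg (hx i) (hy i))]
  simp only [hterm] at key
  rwa [← rpow_le_rpow_iff (add_nonneg (lpNorm_nonneg _ _) (lpNorm_nonneg _ _))
    (lpNorm_nonneg _ _) hs0, lpNorm_rpow hs0.ne']

theorem lpNorm_div_two_sq (p : ℝ) (w : Fin d → ℝ) :
    lpNorm (p / 2) (fun i => w i ^ 2) = lpNorm p w ^ 2 := by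
  have habs : ∀ i, |w i ^ 2| ^ (p / 2) = |w i| ^ p := fun i => by
    rw [abs_pow, ← rpow_natCast, ← rpow_mul (abs_nonneg _)]; ring_nf
  simp only [lpNorm, habs]
  rw [← rpow_natCast, ← rpow_mul (sum_nonneg fun _ _ => rpow_nonneg (abs_nonneg _) _)]
  ring_nf

theorem rpow_add_rpow_div_two_le {s : ℝ} (hs0 : 0 < s) (hs1 : s ≤ 1) {a b : ℝ} (ha : 0 ≤ a)
    (hb : 0 ≤ b) : (a ^ s + b ^ s) / 2 ≤ ((a + b) / 2) ^ s := by
  have := (concaveOn_rpow hs0.le hs1).2 (mem_Ici.2 ha) (mem_Ici.2 hb)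
    (by norm_num : (0 : ℝ) ≤ 1 / 2) (by norm_num : (0 : ℝ) ≤ 1 / 2) (by norm_num)
  simp only [smul_eq_mul] at this
  calc (a ^ s + b ^ s) / 2 = 1 / 2 * a ^ s + 1 / 2 * b ^ s := by ring
    _ ≤ (1 / 2 * a + 1 / 2 * b) ^ s := this
    _ = ((a + b) / 2) ^ s := by ring_nf

theorem lpNorm_sq_add_mul_lpNorm_sq_le {p : ℝ} (hp1 : 1 < p) (hp2 : p ≤ 2) (u v : Fin d → ℝ) :
    lpNorm p u ^ 2 + (p - 1) * lpNorm p v ^ 2 ≤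
      (lpNorm p (u + v) ^ 2 + lpNorm p (u - v) ^ 2) / 2 := by
  have hp0 : 0 < p := by linarith
  have hs0 : 0 < p / 2 := by linarith
  set X : Fin d → ℝ := fun i => u i ^ 2 + (p - 1) * v i ^ 2
  have hminkowski : lpNorm p u ^ 2 + (p - 1) * lpNorm p v ^ 2 ≤ lpNorm (p / 2) X := by
    have := lpNorm_add_lpNorm_le_of_le_one hs0 (by linarith) (x := fun i => u i ^ 2)
      (y := (p - 1) • fun i => v i ^ 2) (fun i => sq_nonneg _)
      (fun i => mul_nonneg (by linarith) (sq_nonneg _))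
    rwa [lpNorm_smul hs0, lpNorm_div_two_sq p, lpNorm_div_two_sq p,
      abs_of_nonneg (by linarith)] at this
  have hpointwise : lpNorm (p / 2) X ^ (p / 2) ≤
      (lpNorm p (u + v) ^ p + lpNorm p (u - v) ^ p) / 2 := by
    rw [lpNorm_rpow hs0.ne', lpNorm_rpow hp0.ne', lpNorm_rpow hp0.ne', ← sum_add_distrib,
      sum_div]
    refine sum_le_sum fun i _ => ?_
    rw [abs_of_nonneg (by positivity)]
    exact sq_add_mul_sq_rpow_le hp1 hp2 (u i) (v i)
  have hconcave : (lpNorm p (u + v) ^ p + lpNorm p (u - v) ^ p) / 2 ≤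
      ((lpNorm p (u + v) ^ 2 + lpNorm p (u - v) ^ 2) / 2) ^ (p / 2) := by
    have hsq : ∀ w : Fin d → ℝ, lpNorm p w ^ p = (lpNorm p w ^ 2) ^ (p / 2) := fun w => by
      rw [← rpow_natCast, ← rpow_mul (lpNorm_nonneg _ _)]; ring_nf
    rw [hsq, hsq]
    exact rpow_add_rpow_div_two_le hs0 (by linarith) (sq_nonneg _) (sq_nonneg _)
  refine hminkowski.trans ((rpow_le_rpow_iff (lpNorm_nonneg _ _) (by positivity) hs0).1 ?_)
  exact hpointwise.trans hconcave

theorem strongConvexOn_lpNorm_sq {p : ℝ≥0∞} [Fact (1 ≤ p)] (hp1 : 1 < p) (hp2 : p ≤ 2) :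
    StrongConvexOn (univ : Set (PiLp p fun _ : Fin d => ℝ)) 1
      fun x => 1 / (2 * (p.toReal - 1)) * ‖x‖ ^ 2 := by
  have hp : p ≠ ∞ := ne_top_of_le_ne_top ENNReal.ofNat_ne_top hp2
  have hp1' : 1 < p.toReal := by
    simpa using (ENNReal.toReal_lt_toReal ENNReal.one_ne_top hp).2 hp1
  have hp2' : p.toReal ≤ 2 := by simpa using ENNReal.toReal_mono ENNReal.ofNat_ne_top hp2
  refine strongConvexOn_univ_of_midpoint_le (by fun_prop) fun u v => ?_
  have h := div_le_div_of_nonneg_right (lpNorm_sq_add_mul_lpNorm_sq_le hp1' hp2' u.ofLp v.ofLp)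
    (by linarith : (0 : ℝ) ≤ 2 * (p.toReal - 1))
  simp only [norm_eq_lpNorm_ofLp (by linarith : 0 < p.toReal), WithLp.ofLp_add, WithLp.ofLp_sub]
  have hp1ne : p.toReal - 1 ≠ 0 := by linarith
  refine (Eq.trans_le ?_ h).trans_eq ?_ <;> field_simp

end lpNorm

/-- **2-uniform convexity of `ψ_r(w) = (1/(2(r−1)))‖w‖_r²` for `r ∈ (1,2]`** w.r.t. the
ℓ_r norm on ℝ^d. -/
theorem stmt2 {d : ℕ} (r : ℝ) (hr1 : 1 < r) (hr2 : r ≤ 2)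
    (w w' : Fin d → ℝ) (α : ℝ) (hα0 : 0 ≤ α) (hα1 : α ≤ 1) :
    1 / (2 * (r - 1)) * lpNorm r (α • w + (1 - α) • w') ^ 2 ≤
      α * (1 / (2 * (r - 1)) * lpNorm r w ^ 2)
        + (1 - α) * (1 / (2 * (r - 1)) * lpNorm r w' ^ 2)
        - α * (1 - α) / 2 * lpNorm r (w - w') ^ 2 := by
  have : Fact (1 ≤ ENNReal.ofReal r) := ⟨by simpa using hr1.le⟩
  have hr : (ENNReal.ofReal r).toReal = r := ENNReal.toReal_ofReal (by linarith)
  have h := (strongConvexOn_lpNorm_sq (d := d) (p := ENNReal.ofReal r) (by simpa using hr1)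
    (by simpa using hr2)).2 (mem_univ (WithLp.toLp _ w)) (mem_univ (WithLp.toLp _ w')) hα0
    (sub_nonneg.2 hα1) (add_sub_cancel α 1)
  simp only [norm_eq_lpNorm_ofLp (hr ▸ (by linarith : (0 : ℝ) < r)), hr, smul_eq_mul,
    WithLp.ofLp_add, WithLp.ofLp_sub, WithLp.ofLp_smul] at h
  linarith
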